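/- Let P be a probability measure supported on [−1,1]^d, ρ0 a probability measure on ℝ^{d+1} supported in {‖w‖₁ ≤ 1}, σ = ReLU, x̃ = (x,1), and Q*^{(n)} any probability measure supported on [−1,1]^d (e.g. an empirical measure). Define L^{(n)}(a) = ∫ V_a dQ*^{(n)} + log ∫ e^{-V_a} dP for a ∈ L²(ρ0), where V_a(x) = ∫ a(w) σ(w·x̃) dρ0(w). Then for every R ≥ 0, L^{(n)} attains its minimum on the closed ball {a ∈ L²(ρ0) : ‖a‖_{L²(ρ0)} ≤ R}. -/

import Mathlib

open MeasureTheory Real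
open scoped BigOperators

/-- `w · x̃` where `x̃ = (x, 1) ∈ ℝ^{d+1}`. -/
def dotTilde {d : ℕ} (w : Fin (d + 1) → ℝ) (x : Fin d → ℝ) : ℝ :=
  (∑ i : Fin d, w i.castSucc * x i) + w (Fin.last d)

/-- The ReLU random feature potential `V_a(x) = ∫ a(w) ReLU(w·x̃) dρ₀(w)`. -/
noncomputable def rfPotential {d : ℕ} (ρ0 : Measure (Fin (d + 1) → ℝ))
    (a : (Fin (d + 1) → ℝ) → ℝ) (x : Fin d → ℝ) : ℝ :=
  ∫ w, a w * max (dotTilde w x) 0 ∂ρ0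

/-- The objective `L^{(n)}(a) = ∫ V_a dQ + log ∫ e^{-V_a} dP`. -/
noncomputable def rfObjective {d : ℕ} (P Q : Measure (Fin d → ℝ))
    (ρ0 : Measure (Fin (d + 1) → ℝ)) (a : (Fin (d + 1) → ℝ) → ℝ) : ℝ :=
  (∫ x, rfPotential ρ0 a x ∂Q) + Real.log (∫ y, Real.exp (-(rfPotential ρ0 a y)) ∂P)

/-!
With `φ x ∈ L²(ρ₀)` the ReLU feature `w ↦ σ(w · x̃)`, the potential is `V_a(x) = ⟪a, φ x⟫`, so the
objective becomes `f ↦ ⟪f, ∫ φ dQ⟫ + log ∫ exp (-⟪f, φ y⟫) dP` on the Hilbert space `L²(ρ₀)`.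
Through the Riesz isomorphism the ball of radius `R` is the dual ball, which is weak-* compact by
Banach–Alaoglu. Since `φ` is Lipschitz, the features of the cube form a norm-compact set `K`, and on
norm-bounded sets weak-* convergence is uniform on `K`; hence the exponential integral, and with it
the objective, is weak-* continuous on the ball and attains its minimum there.
-/

open Filter Topology Metric Set
open scoped RealInnerProductSpace ENNReal

theorem IsCompact.tendstoUniformlyOn_of_continuousOn_prod {α β γ : Type*} [TopologicalSpace α]
    [TopologicalSpace β] [UniformSpace γ] {f : α → β → γ} {s : Set α} {K : Set β} {q : α}
    (hK : IsCompact K) (hf : ContinuousOn f.uncurry (s ×ˢ K)) (hq : q ∈ s) :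
    TendstoUniformlyOn f (f q) (𝓝[s] q) K := fun u hu ↦ by
  obtain ⟨v, hv, hvu⟩ := hK.mem_uniformity_of_prod hf hq (symm_le_uniformity hu)
  exact mem_of_superset hv hvu

theorem TendstoUniformlyOn.tendsto_integral_of_ae_mem {α ι G : Type*} [MeasurableSpace α]
    [NormedAddCommGroup G] [NormedSpace ℝ G] {μ : Measure α} [IsFiniteMeasure μ] {l : Filter ι}
    {F : ι → α → G} {f : α → G} {s : Set α} (h : TendstoUniformlyOn F f l s)
    (hs : ∀ᵐ x ∂μ, x ∈ s) (hF : ∀ᶠ i in l, Integrable (F i) μ) (hf : Integrable f μ) :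
    Tendsto (fun i ↦ ∫ x, F i x ∂μ) l (𝓝 (∫ x, f x ∂μ)) := by
  refine Metric.tendsto_nhds.2 fun ε hε ↦ ?_
  obtain ⟨δ, hδ, hδε⟩ := exists_pos_mul_lt hε (μ.real univ)
  filter_upwards [hF, Metric.tendstoUniformlyOn_iff.1 h δ hδ] with i hFi hi
  rw [dist_eq_norm, ← integral_sub hFi hf]
  calc ‖∫ x, (F i x - f x) ∂μ‖ ≤ δ * μ.real univ :=
        norm_integral_le_of_norm_le_const <| hs.mono fun x hx ↦ by
          rw [← dist_eq_norm, dist_comm]; exact (hi x hx).le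
    _ < ε := by rwa [mul_comm]

theorem MeasureTheory.Integrable.of_ae_mem_isBounded {α G : Type*} [MeasurableSpace α]
    [NormedAddCommGroup G] {μ : Measure α} [IsFiniteMeasure μ] {f : α → G} {K : Set G}
    (hf : AEStronglyMeasurable f μ) (hK : Bornology.IsBounded K) (hfK : ∀ᵐ x ∂μ, f x ∈ K) : Integrable f μ :=
  let ⟨C, hC⟩ := hK.exists_norm_le
  .of_bound hf C (hfK.mono fun _ hx ↦ hC _ hx)

namespace WeakDual

variable {𝕜 E : Type*} [NontriviallyNormedField 𝕜] [NormedAddCommGroup E] [NormedSpace 𝕜 E]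

theorem continuousOn_eval_of_norm_le {s : Set (WeakDual 𝕜 E)} {R : ℝ}
    (hs : ∀ ℓ ∈ s, ‖toStrongDual ℓ‖ ≤ R) :
    ContinuousOn (fun p : WeakDual 𝕜 E × E ↦ p.1 p.2) (s ×ˢ univ) := by
  rintro ⟨ℓ₀, v₀⟩ -
  have h_fixed : Tendsto (fun p : WeakDual 𝕜 E × E ↦ p.1 v₀) (𝓝[s ×ˢ univ] (ℓ₀, v₀))
      (𝓝 (ℓ₀ v₀)) :=
    ((eval_continuous v₀).comp continuous_fst).continuousWithinAt
  have h_moving : Tendsto (fun p : WeakDual 𝕜 E × E ↦ p.1 (p.2 - v₀)) (𝓝[s ×ˢ univ] (ℓ₀, v₀))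
      (𝓝 0) := by
    refine squeeze_zero_norm' (a := fun p ↦ R * ‖p.2 - v₀‖) ?_ ?_
    · filter_upwards [self_mem_nhdsWithin] with p hp
      exact ((toStrongDual p.1).le_opNorm _).trans
        (mul_le_mul_of_nonneg_right (hs _ hp.1) (norm_nonneg _))
    · have : Tendsto (fun p : WeakDual 𝕜 E × E ↦ p.2) (𝓝[s ×ˢ univ] (ℓ₀, v₀)) (𝓝 v₀) :=
        continuous_snd.continuousWithinAt
      simpa using (this.sub_const v₀).norm.const_mul R
  simpa [ContinuousWithinAt] using h_moving.add h_fixed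

end WeakDual

section LogPartition

variable {E X : Type*} [NormedAddCommGroup E] [NormedSpace ℝ E] [MeasurableSpace X]
  {μ : Measure X} [IsFiniteMeasure μ] {φ : X → E} {K : Set E}

theorem integrable_exp_neg_eval_comp (ℓ : WeakDual ℝ E) (hφ : AEStronglyMeasurable φ μ)
    (hK : IsCompact K) (hφK : ∀ᵐ x ∂μ, φ x ∈ K) : Integrable (fun x ↦ exp (-ℓ (φ x))) μ :=
  have hcont : Continuous fun v ↦ exp (-ℓ v) := by fun_prop
  .of_ae_mem_isBounded (hcont.comp_aestronglyMeasurable hφ) (hK.image hcont).isBounded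
    (hφK.mono fun _ hx ↦ mem_image_of_mem _ hx)

theorem continuousOn_integral_exp_neg_eval {s : Set (WeakDual ℝ E)} {R : ℝ}
    (hs : ∀ ℓ ∈ s, ‖WeakDual.toStrongDual ℓ‖ ≤ R) (hφ : AEStronglyMeasurable φ μ)
    (hK : IsCompact K) (hφK : ∀ᵐ x ∂μ, φ x ∈ K) :
    ContinuousOn (fun ℓ : WeakDual ℝ E ↦ ∫ x, exp (-ℓ (φ x)) ∂μ) s := fun ℓ₀ hℓ₀ ↦ by
  have hunif : TendstoUniformlyOn (fun (ℓ : WeakDual ℝ E) v ↦ exp (-ℓ v))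
      (fun v ↦ exp (-ℓ₀ v)) (𝓝[s] ℓ₀) K :=
    hK.tendstoUniformlyOn_of_continuousOn_prod
      ((continuous_exp.comp continuous_neg).comp_continuousOn
        ((WeakDual.continuousOn_eval_of_norm_le hs).mono (prod_mono subset_rfl (subset_univ K))))
      hℓ₀
  exact (hunif.comp φ).tendsto_integral_of_ae_mem hφK
    (.of_forall fun ℓ ↦ integrable_exp_neg_eval_comp ℓ hφ hK hφK)
    (integrable_exp_neg_eval_comp ℓ₀ hφ hK hφK)

theorem WeakDual.exists_isMinOn_eval_add_log_integral_exp [NeZero μ]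
    (hφ : AEStronglyMeasurable φ μ) (hK : IsCompact K) (hφK : ∀ᵐ x ∂μ, φ x ∈ K) (m : E)
    {R : ℝ} (hR : 0 ≤ R) :
    ∃ ℓ ∈ toStrongDual ⁻¹' closedBall 0 R, IsMinOn
      (fun ℓ : WeakDual ℝ E ↦ ℓ m + log (∫ x, exp (-ℓ (φ x)) ∂μ))
      (toStrongDual ⁻¹' closedBall 0 R) ℓ := by
  refine (isCompact_closedBall (𝕜 := ℝ) 0 R).exists_isMinOn ⟨0, by simpa using hR⟩ ?_
  refine (eval_continuous m).continuousOn.add <|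
    (continuousOn_integral_exp_neg_eval (R := R) (fun ℓ hℓ ↦ by simpa using hℓ) hφ hK hφK).log
      fun ℓ _ ↦ (integral_exp_pos (integrable_exp_neg_eval_comp ℓ hφ hK hφK)).ne'

end LogPartition

theorem exists_isMinOn_inner_add_log_integral_exp {E X : Type*} [NormedAddCommGroup E]
    [InnerProductSpace ℝ E] [CompleteSpace E] [MeasurableSpace X] {μ : Measure X}
    [IsFiniteMeasure μ] [NeZero μ] {φ : X → E} {K : Set E} (hφ : AEStronglyMeasurable φ μ)
    (hK : IsCompact K) (hφK : ∀ᵐ x ∂μ, φ x ∈ K) (m : E) {R : ℝ} (hR : 0 ≤ R) :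
    ∃ f ∈ closedBall (0 : E) R,
      IsMinOn (fun f ↦ ⟪f, m⟫ + log (∫ x, exp (-⟪f, φ x⟫) ∂μ)) (closedBall 0 R) f := by
  obtain ⟨ℓ, hℓ, hmin⟩ := WeakDual.exists_isMinOn_eval_add_log_integral_exp hφ hK hφK m hR
  let J : E → WeakDual ℝ E := fun f ↦ StrongDual.toWeakDual (InnerProductSpace.toDual ℝ E f)
  refine ⟨(InnerProductSpace.toDual ℝ E).symm (WeakDual.toStrongDual ℓ), by simpa using hℓ,
    hmin.comp_mapsTo (g := J) (fun f hf ↦ by simpa [J] using hf) ?_⟩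
  simp [J]

theorem MeasureTheory.MemLp.integral_sq_le_sq_iff {α : Type*} [MeasurableSpace α] {μ : Measure α}
    {b : α → ℝ} (hb : MemLp b 2 μ) {R : ℝ} (hR : 0 ≤ R) :
    ∫ w, b w ^ 2 ∂μ ≤ R ^ 2 ↔ hb.toLp b ∈ closedBall 0 R := by
  have h_sq : ∫ w, b w ^ 2 ∂μ = ‖hb.toLp b‖ ^ 2 := by
    rw [← real_inner_self_eq_norm_sq, L2.inner_def]
    refine integral_congr_ae ?_
    filter_upwards [hb.coeFn_toLp] with w hw
    simp [hw, sq]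
  rw [h_sq, mem_closedBall_zero_iff, pow_le_pow_iff_left₀ (norm_nonneg _) hR two_ne_zero]

section ReLUFeatures

variable {d : ℕ} {w : Fin (d + 1) → ℝ}

theorem abs_dotTilde_sub_le (hw : ∑ i, |w i| ≤ 1) (x y : Fin d → ℝ) :
    |dotTilde w x - dotTilde w y| ≤ ‖x - y‖ := by
  have h_sub : dotTilde w x - dotTilde w y = ∑ i : Fin d, w i.castSucc * (x - y) i := by
    simp [dotTilde, mul_sub, Finset.sum_sub_distrib]
  rw [h_sub]
  calc |∑ i : Fin d, w i.castSucc * (x - y) i| ≤ ∑ i : Fin d, |w i.castSucc| * ‖x - y‖ :=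
        (Finset.abs_sum_le_sum_abs _ _).trans <| Finset.sum_le_sum fun i _ ↦ by
          rw [abs_mul]; gcongr; exact norm_le_pi_norm (x - y) i
    _ ≤ (∑ i, |w i|) * ‖x - y‖ := by
        rw [← Finset.sum_mul, Fin.sum_univ_castSucc]
        gcongr
        linarith [abs_nonneg (w (Fin.last d))]
    _ ≤ ‖x - y‖ := mul_le_of_le_one_left (norm_nonneg _) hw

theorem abs_dotTilde_le (hw : ∑ i, |w i| ≤ 1) (x : Fin d → ℝ) : |dotTilde w x| ≤ ‖x‖ + 1 := by
  have h_zero : dotTilde w 0 = w (Fin.last d) := by simp [dotTilde]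
  have h_last : |w (Fin.last d)| ≤ 1 :=
    (Finset.single_le_sum (fun i _ ↦ abs_nonneg (w i)) (Finset.mem_univ _)).trans hw
  have := abs_dotTilde_sub_le hw x 0
  rw [sub_zero, h_zero] at this
  linarith [abs_sub_abs_le_abs_sub (dotTilde w x) (w (Fin.last d))]

noncomputable def reluFeature (x : Fin d → ℝ) (w : Fin (d + 1) → ℝ) : ℝ := max (dotTilde w x) 0

theorem continuous_reluFeature (x : Fin d → ℝ) : Continuous (reluFeature x) := by
  unfold reluFeature dotTilde
  fun_prop

theorem abs_reluFeature_le (hw : ∑ i, |w i| ≤ 1) (x : Fin d → ℝ) :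
    |reluFeature x w| ≤ ‖x‖ + 1 := by
  refine le_trans ?_ (abs_dotTilde_le hw x)
  rw [reluFeature, abs_of_nonneg (le_max_right _ _)]
  exact max_le (le_abs_self _) (abs_nonneg _)

theorem abs_reluFeature_sub_le (hw : ∑ i, |w i| ≤ 1) (x y : Fin d → ℝ) :
    |reluFeature x w - reluFeature y w| ≤ ‖x - y‖ :=
  (abs_max_sub_max_le_abs _ _ 0).trans (abs_dotTilde_sub_le hw x y)

variable (ρ0 : Measure (Fin (d + 1) → ℝ)) [IsFiniteMeasure ρ0]

theorem memLp_reluFeature (hρ0 : ∀ᵐ w ∂ρ0, ∑ i, |w i| ≤ 1) (x : Fin d → ℝ) :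
    MemLp (reluFeature x) 2 ρ0 :=
  .of_bound (continuous_reluFeature x).aestronglyMeasurable (‖x‖ + 1)
    (hρ0.mono fun _ hw ↦ abs_reluFeature_le hw x)

noncomputable def reluFeatureLp (hρ0 : ∀ᵐ w ∂ρ0, ∑ i, |w i| ≤ 1) (x : Fin d → ℝ) :
    Lp ℝ 2 ρ0 :=
  (memLp_reluFeature ρ0 hρ0 x).toLp _

variable (hρ0 : ∀ᵐ w ∂ρ0, ∑ i, |w i| ≤ 1)

theorem continuous_reluFeatureLp : Continuous (reluFeatureLp ρ0 hρ0) := by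
  refine (LipschitzWith.of_dist_le_mul (K := measureUnivNNReal ρ0 ^ (2 : ℝ≥0∞).toReal⁻¹)
    fun x y ↦ ?_).continuous
  rw [dist_eq_norm, dist_eq_norm, reluFeatureLp, reluFeatureLp, ← MemLp.toLp_sub]
  refine Lp.norm_le_of_ae_bound (norm_nonneg _) ?_
  filter_upwards [((memLp_reluFeature ρ0 hρ0 x).sub (memLp_reluFeature ρ0 hρ0 y)).coeFn_toLp,
    hρ0] with w h_coe hw
  rw [h_coe]
  exact abs_reluFeature_sub_le hw x y

theorem rfPotential_eq_inner {b : (Fin (d + 1) → ℝ) → ℝ} (hb : MemLp b 2 ρ0) (x : Fin d → ℝ) :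
    rfPotential ρ0 b x = ⟪hb.toLp b, reluFeatureLp ρ0 hρ0 x⟫ := by
  rw [rfPotential, L2.inner_def]
  refine integral_congr_ae ?_
  filter_upwards [hb.coeFn_toLp, (memLp_reluFeature ρ0 hρ0 x).coeFn_toLp] with w hbw hφw
  simp [reluFeatureLp, hbw, hφw, reluFeature, mul_comm]

theorem rfObjective_eq_inner {P Q : Measure (Fin d → ℝ)} (hQ : Integrable (reluFeatureLp ρ0 hρ0) Q)
    {b : (Fin (d + 1) → ℝ) → ℝ} (hb : MemLp b 2 ρ0) :
    rfObjective P Q ρ0 b = ⟪hb.toLp b, ∫ x, reluFeatureLp ρ0 hρ0 x ∂Q⟫ +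
      log (∫ y, exp (-⟪hb.toLp b, reluFeatureLp ρ0 hρ0 y⟫) ∂P) := by
  simp only [rfObjective, rfPotential_eq_inner ρ0 hρ0 hb, integral_inner hQ]

end ReLUFeatures

/-- **existence of the regularized minimizer.** With `P` supported on
`[−1,1]^d`, `ρ₀` supported in the ℓ¹ unit ball, ReLU features, and `Q*^{(n)}` any
probability measure supported on `[−1,1]^d`, for every `R ≥ 0` the objective
`L^{(n)}(a) = ∫ V_a dQ*^{(n)} + log ∫ e^{-V_a} dP` attains its minimum on the closed ball
`{a ∈ L²(ρ₀) : ‖a‖_{L²(ρ₀)} ≤ R}`. -/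
theorem regularized_minimizer_exists {d : ℕ}
    (P : Measure (Fin d → ℝ)) [IsProbabilityMeasure P]
    (hPsupp : P {x | ∀ i, |x i| ≤ 1}ᶜ = 0)
    (ρ0 : Measure (Fin (d + 1) → ℝ)) [IsProbabilityMeasure ρ0]
    (hρ0supp : ρ0 {w | (∑ i, |w i|) ≤ 1}ᶜ = 0)
    (Qn : Measure (Fin d → ℝ)) [IsProbabilityMeasure Qn]
    (hQn : Qn {x | ∀ i, |x i| ≤ 1}ᶜ = 0)
    (R : ℝ) (hR : 0 ≤ R) :
    ∃ a : (Fin (d + 1) → ℝ) → ℝ, MemLp a 2 ρ0 ∧ (∫ w, a w ^ 2 ∂ρ0) ≤ R ^ 2 ∧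
      ∀ b : (Fin (d + 1) → ℝ) → ℝ, MemLp b 2 ρ0 → (∫ w, b w ^ 2 ∂ρ0) ≤ R ^ 2 →
        rfObjective P Qn ρ0 a ≤ rfObjective P Qn ρ0 b := by
  have h_cube : {x : Fin d → ℝ | ∀ i, |x i| ≤ 1} = closedBall 0 1 := by
    ext x; simp [pi_norm_le_iff_of_nonneg, Real.norm_eq_abs]
  have hρ0 : ∀ᵐ w ∂ρ0, ∑ i, |w i| ≤ 1 := mem_ae_iff.2 hρ0supp
  have hP : ∀ᵐ x ∂P, x ∈ closedBall 0 1 := mem_ae_iff.2 (h_cube ▸ hPsupp)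
  have hQ : ∀ᵐ x ∂Qn, x ∈ closedBall 0 1 := mem_ae_iff.2 (h_cube ▸ hQn)
  have hφ := continuous_reluFeatureLp ρ0 hρ0
  have hK := (isCompact_closedBall (0 : Fin d → ℝ) 1).image hφ
  have hQφ : Integrable (reluFeatureLp ρ0 hρ0) Qn := .of_ae_mem_isBounded hφ.aestronglyMeasurable
    hK.isBounded (hQ.mono fun _ hx ↦ mem_image_of_mem _ hx)
  obtain ⟨f, hfR, hmin⟩ := exists_isMinOn_inner_add_log_integral_exp hφ.aestronglyMeasurable hK
    (hP.mono fun _ hx ↦ mem_image_of_mem _ hx) (∫ x, reluFeatureLp ρ0 hρ0 x ∂Qn) hR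
  refine ⟨f, Lp.memLp f, ((Lp.memLp f).integral_sq_le_sq_iff hR).2 (by rwa [Lp.toLp_coeFn]),
    fun b hb hbR ↦ ?_⟩
  rw [rfObjective_eq_inner ρ0 hρ0 hQφ hb, rfObjective_eq_inner ρ0 hρ0 hQφ (Lp.memLp f),
    Lp.toLp_coeFn]
  exact hmin ((hb.integral_sq_le_sq_iff hR).1 hbR)
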